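/- arXiv:1412.8116 — 8 statements merged into one kernel-verified Lean document; each statement's English description precedes it below -/
import Mathlib

section
/- Let n ≥ 1 and let u, v be permutations of {1,…,n} with u ≼ v in the Bruhat order and u ≠ v. Let j be the smallest index with u(j) ≠ v(j); then u(j) < v(j). Moreover there exists an index k with j < k ≤ n and u(j) ≤ v(k) < v(j); let k be the least such index and let v' = v∘(j k) be v composed with the transposition of positions j and k. Then u ≼ v', v' ≼ v, and v' ≠ v. -/
/-- `r_w[p,q] = #{ j ≤ p : w(j) ≥ q }`, the rank numbers defining the Bruhat order
(here indices run over `Fin n`, i.e. positions and values are 0-based). -/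
def rPerm {n : ℕ} (w : Equiv.Perm (Fin n)) (p q : Fin n) : ℕ :=
  (Finset.univ.filter (fun j : Fin n => j ≤ p ∧ q ≤ w j)).card

/-- The Bruhat order on the symmetric group: `u ≼ v` iff `r_u[p,q] ≤ r_v[p,q]` for all `p, q`. -/
def BruhatLE {n : ℕ} (u v : Equiv.Perm (Fin n)) : Prop :=
  ∀ p q : Fin n, rPerm u p q ≤ rPerm v p q

/-!
With `v' = v * swap j k`, the rank numbers satisfy `r_{v'} + 1 = r_v` on the rectangle
`j ≤ p < k`, `v k < q ≤ v j` and `r_{v'} = r_v` off it, so `v' ≼ v`, and `u ≼ v'` amounts to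
`r_u < r_v` on the rectangle. There `r_w[p, u j] = r_w[p, q] + #{i ≤ p | u j ≤ w i < q}`; by the
minimality of `j` and of `k`, the positions counted for `v` all lie before `j`, where `u = v`,
while for `u` the position `j` itself is counted as well. So `r_u[p, u j] ≤ r_v[p, u j]` forces
`r_u[p, q] < r_v[p, q]`.
-/

open Finset Equiv

theorem Fintype.sum_swap_apply_add {ι M : Type*} [Fintype ι] [DecidableEq ι] [AddCommMonoid M]
    (F : ι → ι → M) {j k : ι} (hjk : j ≠ k) :
    ∑ i, F (swap j k i) i + (F j j + F k k) = ∑ i, F i i + (F k j + F j k) := by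
  have hk : k ∈ univ.erase j := mem_erase.2 ⟨hjk.symm, mem_univ k⟩
  have hrest :
      ∑ i ∈ (univ.erase j).erase k, F (swap j k i) i = ∑ i ∈ (univ.erase j).erase k, F i i :=
    Finset.sum_congr rfl fun i hi => by
      rw [swap_apply_of_ne_of_ne (mem_erase.1 (mem_erase.1 hi).2).1 (mem_erase.1 hi).1]
  rw [← add_sum_erase _ _ (mem_univ j), ← add_sum_erase _ _ hk,
    ← add_sum_erase _ (fun i => F i i) (mem_univ j), ← add_sum_erase _ (fun i => F i i) hk,
    hrest, swap_apply_left, swap_apply_right]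
  abel

section

variable {n : ℕ} {u v : Perm (Fin n)} {j k p q : Fin n}

theorem rPerm_eq_sum (w : Perm (Fin n)) (p q : Fin n) :
    rPerm w p q = ∑ i, if i ≤ p ∧ q ≤ w i then 1 else 0 :=
  card_filter _ _

theorem rPerm_mul_swap_add (hjk : j < k) (hv : v k < v j) :
    rPerm (v * swap j k) p q + (if j ≤ p ∧ p < k ∧ v k < q ∧ q ≤ v j then 1 else 0)
      = rPerm v p q := by
  have h := Fintype.sum_swap_apply_add (fun a b => if a ≤ p ∧ q ≤ v b then 1 else 0) hjk.ne
  have hσ : rPerm (v * swap j k) p q = ∑ i, if swap j k i ≤ p ∧ q ≤ v i then 1 else 0 := by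
    rw [rPerm_eq_sum, ← Equiv.sum_comp (swap j k)]
    simp only [Perm.mul_apply, swap_apply_self]
  rw [hσ, rPerm_eq_sum]
  simp only [Fin.le_def, Fin.lt_def] at h hjk hv ⊢
  split_ifs at h ⊢ <;> omega

theorem bruhatLE_mul_swap_self (hjk : j < k) (hv : v k < v j) : BruhatLE (v * swap j k) v :=
  fun _ _ => (rPerm_mul_swap_add hjk hv).symm ▸ Nat.le_add_right _ _

theorem rPerm_eq_rPerm_add_card (w : Perm (Fin n)) (p : Fin n) {a b : Fin n} (hab : a ≤ b) :
    rPerm w p a = rPerm w p b + #{i | i ≤ p ∧ a ≤ w i ∧ w i < b} := by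
  rw [rPerm, rPerm, ← card_union_of_disjoint]
  · congr 1
    ext i
    simp only [mem_filter, mem_univ, true_and, mem_union]
    constructor
    · rintro ⟨hi, ha⟩
      exact (le_or_gt b (w i)).imp (⟨hi, ·⟩) (⟨hi, ha, ·⟩)
    · rintro (⟨hi, hb⟩ | ⟨hi, ha, -⟩)
      exacts [⟨hi, hab.trans hb⟩, ⟨hi, ha⟩]
  · exact disjoint_filter.2 fun i _ h h' => h.2.not_gt h'.2.2

theorem apply_lt_apply_of_bruhatLE (huv : BruhatLE u v) (hagree : ∀ i < j, u i = v i)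
    (hj : u j ≠ v j) : u j < v j := by
  refine (lt_or_gt_of_ne hj).resolve_right fun hvu => (huv j (u j)).not_gt ?_
  refine card_lt_card <| (ssubset_iff_of_subset fun i hi => ?_).2 ⟨j, by simp, by simp [hvu]⟩
  simp only [mem_filter, mem_univ, true_and] at hi ⊢
  obtain hij | rfl := hi.1.lt_or_eq
  · exact ⟨hi.1, hagree i hij ▸ hi.2⟩
  · exact absurd hi.2 hvu.not_ge

theorem lt_symm_apply_of_forall_lt_eq (hagree : ∀ i < j, u i = v i) (hj : u j ≠ v j) :
    j < v.symm (u j) := by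
  refine lt_of_not_ge fun h => ?_
  obtain h | h := h.lt_or_eq
  · exact h.ne (u.injective (by rw [hagree _ h, apply_symm_apply]))
  · exact hj (by simpa using congrArg v h)

theorem rPerm_lt_rPerm_of_bruhatLE (huv : BruhatLE u v) (hagree : ∀ i < j, u i = v i)
    (hgap : ∀ i, j < i → i < k → ¬(u j ≤ v i ∧ v i < v j))
    (hjp : j ≤ p) (hpk : p < k) (huq : u j < q) (hqv : q ≤ v j) :
    rPerm u p q < rPerm v p q := by
  have hu := rPerm_eq_rPerm_add_card u p huq.le
  have hv := rPerm_eq_rPerm_add_card v p huq.le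
  have hcard : #{i | i ≤ p ∧ u j ≤ v i ∧ v i < q} < #{i | i ≤ p ∧ u j ≤ u i ∧ u i < q} := by
    refine card_lt_card <| (ssubset_iff_of_subset fun i hi => ?_).2
      ⟨j, by simp [hjp, huq], by simp [hqv.not_gt]⟩
    simp only [mem_filter, mem_univ, true_and] at hi ⊢
    obtain ⟨hip, hji, hiq⟩ := hi
    obtain hij | rfl | hji' := lt_trichotomy i j
    · exact ⟨hip, hagree i hij ▸ ⟨hji, hiq⟩⟩
    · exact absurd hiq hqv.not_gt
    · exact absurd ⟨hji, hiq.trans_le hqv⟩ (hgap i hji' (hip.trans_lt hpk))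
  have := huv p (u j)
  omega

theorem bruhatLE_mul_swap (huv : BruhatLE u v) (hagree : ∀ i < j, u i = v i)
    (hjk : j < k) (hujk : u j ≤ v k) (hv : v k < v j)
    (hgap : ∀ i, j < i → i < k → ¬(u j ≤ v i ∧ v i < v j)) :
    BruhatLE u (v * swap j k) := by
  intro p q
  have h := rPerm_mul_swap_add (p := p) (q := q) hjk hv
  split_ifs at h with hpq
  · obtain ⟨hjp, hpk, hkq, hqj⟩ := hpq
    have := rPerm_lt_rPerm_of_bruhatLE huv hagree hgap hjp hpk (hujk.trans_lt hkq) hqj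
    omega
  · have := huv p q
    omega

end

theorem bruhat_interpolation_general {n : ℕ} (u v : Equiv.Perm (Fin n))
    (huv : BruhatLE u v)
    (j : Fin n) (hj : u j ≠ v j) (hjmin : ∀ j' : Fin n, j' < j → u j' = v j') :
    u j < v j ∧
    (∃ k : Fin n, j < k ∧ u j ≤ v k ∧ v k < v j) ∧
    (∀ k : Fin n, (j < k ∧ u j ≤ v k ∧ v k < v j) →
      (∀ k' : Fin n, k' < k → ¬(j < k' ∧ u j ≤ v k' ∧ v k' < v j)) →
      BruhatLE u (v * Equiv.swap j k) ∧ BruhatLE (v * Equiv.swap j k) v ∧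
        v * Equiv.swap j k ≠ v) := by
  have hlt := apply_lt_apply_of_bruhatLE huv hjmin hj
  refine ⟨hlt, ⟨v.symm (u j), lt_symm_apply_of_forall_lt_eq hjmin hj, by simp, by simpa⟩, ?_⟩
  rintro k ⟨hjk, hujk, hkj⟩ hmin
  have hgap : ∀ i, j < i → i < k → ¬(u j ≤ v i ∧ v i < v j) :=
    fun i hji hik h => hmin i hik ⟨hji, h⟩
  exact ⟨bruhatLE_mul_swap huv hjmin hjk hujk hkj hgap, bruhatLE_mul_swap_self hjk hkj,
    fun h => hkj.ne (by simpa using congrArg (· j) h)⟩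

/-- if `u ≺ v` (Bruhat) and `j` is the smallest position where they differ,
then `u j < v j`; there exists a position `k > j` with `u j ≤ v k < v j`; and for the least
such `k`, the permutation `v' = v ∘ (j k)` satisfies `u ≼ v'`, `v' ≼ v` and `v' ≠ v`. -/
theorem bruhat_interpolation {n : ℕ} (hn : 1 ≤ n) (u v : Equiv.Perm (Fin n))
    (huv : BruhatLE u v) (hne : u ≠ v)
    (j : Fin n) (hj : u j ≠ v j) (hjmin : ∀ j' : Fin n, j' < j → u j' = v j') :
    u j < v j ∧
    (∃ k : Fin n, j < k ∧ u j ≤ v k ∧ v k < v j) ∧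
    (∀ k : Fin n, (j < k ∧ u j ≤ v k ∧ v k < v j) →
      (∀ k' : Fin n, k' < k → ¬(j < k' ∧ u j ≤ v k' ∧ v k' < v j)) →
      BruhatLE u (v * Equiv.swap j k) ∧ BruhatLE (v * Equiv.swap j k) v ∧
        v * Equiv.swap j k ≠ v) :=
  bruhat_interpolation_general u v huv j hj hjmin
end

section
/- Let I = (i₁,…,i_k) be a composition of n and let U, V ∈ S_n^I with U ≼ V in the Bruhat order on S_n^I and U ≠ V. Let j₀ be the least index with U(j₀) ≠ V(j₀); then U(j₀) < V(j₀). Let l ≥ j₀ be the maximal index with V(j₀) = V(j₀+1) = ⋯ = V(l). Then there exists m with l < m ≤ n and U(j₀) ≤ V(m) < V(l); let m be the least such index and let V' = V∘(l m) be V with the values at positions l and m swapped. Then U ≼ V', V' ≼ V, and V' ≠ V. -/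
/-- `r_τ[p,q] = #{ j ≤ p : τ(j) ≥ q }` for a multiset permutation `τ : Fin n → Fin k`. -/
def rMulti {n k : ℕ} (τ : Fin n → Fin k) (p : Fin n) (q : Fin k) : ℕ :=
  (Finset.univ.filter (fun j : Fin n => j ≤ p ∧ q ≤ τ j)).card

/-- Bruhat order on multiset permutations `S_n^I`. -/
def MBruhatLE {n k : ℕ} (τ υ : Fin n → Fin k) : Prop :=
  ∀ (p : Fin n) (q : Fin k), rMulti τ p q ≤ rMulti υ p q

/-- `I = (i₁,…,i_k)` is a composition of `n`: all parts positive with sum `n`. -/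
def IsComposition {k : ℕ} (n : ℕ) (I : Fin k → ℕ) : Prop :=
  (∀ j, 0 < I j) ∧ Finset.univ.sum I = n

/-- `τ : Fin n → Fin k` is an `I`-multiset permutation: the fibre over `j` has `i_j` elements. -/
def IsMultisetPerm {n k : ℕ} (I : Fin k → ℕ) (τ : Fin n → Fin k) : Prop :=
  ∀ j : Fin k, (Finset.univ.filter (fun l : Fin n => τ l = j)).card = I j

/-!
At the first difference `j₀`, `U j₀ < V j₀`, since otherwise `r[j₀, U j₀]` would be larger
for `U`. `U` and `V` have equally many values in `[U j₀, V j₀)`; those of `V` cannot all lie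
before `j₀`, where `V = U`, and none lies on the block `[j₀, l]`, so one lies after `l`.
Swapping `V l` with the first such `V m` lowers `r_V` by one exactly on the rectangle
`[l, m) × (V m, V l]`, and there `r_U < r_V` because, up to `p < m`, `V` has no value in
`[U j₀, V j₀)` from `j₀` on.
-/

open Finset

section FirstDifference

variable {ι β : Type*} [LinearOrder ι] [DecidableEq ι] {U V : ι → β} {j₀ : ι}

lemma card_filter_lt_of_forall_lt_eq (hagree : ∀ j < j₀, U j = V j) {s : Finset ι}
    (hj₀ : j₀ ∈ s) {P : β → Prop} [DecidablePred P] (hU : P (U j₀))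
    (hV : ∀ j ∈ s, j₀ ≤ j → ¬ P (V j)) :
    #{j ∈ s | P (V j)} < #{j ∈ s | P (U j)} := by
  refine card_lt_card <|
    Finset.ssubset_of_subset_of_ssubset ?_ (erase_ssubset (mem_filter.2 ⟨hj₀, hU⟩))
  intro j hj
  obtain ⟨hjs, hPj⟩ := mem_filter.1 hj
  have hjj₀ : j < j₀ := lt_of_not_ge fun h => hV j hjs h hPj
  exact mem_erase.2 ⟨hjj₀.ne, mem_filter.2 ⟨hjs, hagree j hjj₀ ▸ hPj⟩⟩

end FirstDifference

section MultisetPerm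

variable {n k : ℕ} {I : Fin k → ℕ}

lemma IsMultisetPerm.card_filter_comp {τ : Fin n → Fin k} (hτ : IsMultisetPerm I τ)
    (P : Fin k → Prop) [DecidablePred P] :
    #{j | P (τ j)} = ∑ v with P v, I v := by
  rw [card_eq_sum_card_fiberwise (f := τ) (t := {v | P v}) fun j hj => by simpa using hj]
  refine sum_congr rfl fun v hv => ?_
  rw [← hτ v]
  congr 1
  ext j
  simp only [mem_filter, mem_univ, true_and, and_iff_right_iff_imp]
  rintro rfl
  simpa using hv

lemma exists_le_apply_lt_of_forall_lt_eq {U V : Fin n → Fin k} (hU : IsMultisetPerm I U)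
    (hV : IsMultisetPerm I V) {j₀ : Fin n} (hagree : ∀ j < j₀, U j = V j)
    (hlt : U j₀ < V j₀) :
    ∃ j, j₀ ≤ j ∧ U j₀ ≤ V j ∧ V j < V j₀ := by
  by_contra! h
  let P : Fin k → Prop := fun v => U j₀ ≤ v ∧ v < V j₀
  have hcard : #{j | P (V j)} < #{j | P (U j)} :=
    card_filter_lt_of_forall_lt_eq hagree (mem_univ j₀) (P := P) ⟨le_rfl, hlt⟩
      fun j _ hj ⟨hUj, hjV⟩ => (h j hj hUj).not_gt hjV
  exact hcard.ne' ((hU.card_filter_comp P).trans (hV.card_filter_comp P).symm)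

end MultisetPerm

section Rank

variable {n k : ℕ}

lemma rMulti_eq_card_filter_Iic (τ : Fin n → Fin k) (p : Fin n) (q : Fin k) :
    rMulti τ p q = #{j ∈ Iic p | q ≤ τ j} := by
  unfold rMulti
  congr 1
  ext j
  simp

lemma rMulti_congr {f g : Fin n → Fin k} {p : Fin n} (h : ∀ j ≤ p, f j = g j) (q : Fin k) :
    rMulti f p q = rMulti g p q := by
  simp only [rMulti_eq_card_filter_Iic]
  exact congrArg card (filter_congr fun j hj => by rw [h j (mem_Iic.1 hj)])

lemma rMulti_eq_card_erase_add (τ : Fin n → Fin k) {l p : Fin n} (hlp : l ≤ p) (q : Fin k) :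
    rMulti τ p q = #{j ∈ (Iic p).erase l | q ≤ τ j} + if q ≤ τ l then 1 else 0 := by
  rw [rMulti_eq_card_filter_Iic, card_filter, card_filter, add_comm]
  exact (add_sum_erase _ _ (mem_Iic.2 hlp)).symm

lemma rMulti_eq_rMulti_add_card_window (τ : Fin n → Fin k) (p : Fin n) {a b : Fin k}
    (hab : a ≤ b) :
    rMulti τ p a = rMulti τ p b + #{j ∈ Iic p | a ≤ τ j ∧ τ j < b} := by
  simp only [rMulti_eq_card_filter_Iic]
  rw [← card_filter_add_card_filter_not (s := {j ∈ Iic p | a ≤ τ j}) (fun j => b ≤ τ j),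
    filter_filter, filter_filter]
  simp only [not_le]
  congr 2
  ext j
  simp only [mem_filter]
  exact ⟨fun h => ⟨h.1, h.2.2⟩, fun h => ⟨h.1, hab.trans h.2, h.2⟩⟩

end Rank

section Swap

variable {n k : ℕ} {V : Fin n → Fin k} {l m : Fin n}

lemma rMulti_comp_swap_of_le {p : Fin n} (hl : l ≤ p) (hm : m ≤ p) (q : Fin k) :
    rMulti (V ∘ Equiv.swap l m) p q = rMulti V p q := by
  simp only [rMulti_eq_card_filter_Iic]
  refine card_equiv (Equiv.swap l m) fun j => ?_
  have hIic : j ≤ p ↔ Equiv.swap l m j ≤ p := by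
    rcases eq_or_ne j l with rfl | hjl
    · simp [hl, hm]
    rcases eq_or_ne j m with rfl | hjm
    · simp [hl, hm]
    rw [Equiv.swap_apply_of_ne_of_ne hjl hjm]
  simp [hIic]

lemma rMulti_comp_swap_eq_or (hlm : l < m) (hV : V m ≤ V l) (p : Fin n) (q : Fin k) :
    rMulti (V ∘ Equiv.swap l m) p q = rMulti V p q ∨
      (l ≤ p ∧ p < m ∧ V m < q ∧ q ≤ V l ∧
        rMulti (V ∘ Equiv.swap l m) p q + 1 = rMulti V p q) := by
  rcases lt_or_ge p l with hpl | hlp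
  · refine .inl (rMulti_congr (fun j hj => ?_) q)
    rw [Function.comp_apply, Equiv.swap_apply_of_ne_of_ne (hj.trans_lt hpl).ne
      (hj.trans_lt (hpl.trans hlm)).ne]
  rcases le_or_gt m p with hmp | hpm
  · exact .inl (rMulti_comp_swap_of_le hlp hmp q)
  have hoff : #{j ∈ (Iic p).erase l | q ≤ (V ∘ Equiv.swap l m) j} =
      #{j ∈ (Iic p).erase l | q ≤ V j} := by
    refine congrArg card (filter_congr fun j hj => ?_)
    obtain ⟨hjl, hjp⟩ := mem_erase.1 hj
    rw [Function.comp_apply,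
      Equiv.swap_apply_of_ne_of_ne hjl ((mem_Iic.1 hjp).trans_lt hpm).ne]
  rw [rMulti_eq_card_erase_add _ hlp, rMulti_eq_card_erase_add V hlp, hoff,
    Function.comp_apply, Equiv.swap_apply_left]
  by_cases hql : q ≤ V l
  · by_cases hqm : q ≤ V m
    · exact .inl (by rw [if_pos hqm, if_pos hql])
    · exact .inr ⟨hlp, hpm, not_le.1 hqm, hql, by rw [if_neg hqm, if_pos hql]⟩
  · exact .inl (by rw [if_neg (fun hqm => hql (hqm.trans hV)), if_neg hql])

end Swap

section Bruhat

variable {n k : ℕ} {U V : Fin n → Fin k} {j₀ : Fin n}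

lemma MBruhatLE.apply_le_of_forall_lt_eq (hUV : MBruhatLE U V)
    (hagree : ∀ j < j₀, U j = V j) : U j₀ ≤ V j₀ := by
  by_contra! hlt
  have hcard : #{j ∈ Iic j₀ | U j₀ ≤ V j} < #{j ∈ Iic j₀ | U j₀ ≤ U j} :=
    card_filter_lt_of_forall_lt_eq hagree (mem_Iic.2 le_rfl) (P := (U j₀ ≤ ·))
      le_rfl
      fun j hj hj₀j => (le_antisymm (mem_Iic.1 hj) hj₀j) ▸ hlt.not_ge
  rw [← rMulti_eq_card_filter_Iic, ← rMulti_eq_card_filter_Iic] at hcard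
  exact (hUV j₀ (U j₀)).not_gt hcard

lemma MBruhatLE.rMulti_lt (hUV : MBruhatLE U V) (hagree : ∀ j < j₀, U j = V j) {p : Fin n}
    (hj₀p : j₀ ≤ p) (hgap : ∀ j, j₀ ≤ j → j ≤ p → U j₀ ≤ V j → V j₀ ≤ V j) {q : Fin k}
    (hUq : U j₀ < q) (hqV : q ≤ V j₀) :
    rMulti U p q < rMulti V p q := by
  have hwindow :
      #{j ∈ Iic p | U j₀ ≤ V j ∧ V j < q} < #{j ∈ Iic p | U j₀ ≤ U j ∧ U j < q} :=
    card_filter_lt_of_forall_lt_eq hagree (mem_Iic.2 hj₀p) (P := fun v => U j₀ ≤ v ∧ v < q)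
      ⟨le_rfl, hUq⟩ fun j hj hj₀j ⟨hUj, hjq⟩ =>
        (hgap j hj₀j (mem_Iic.1 hj) hUj).not_gt (hjq.trans_le hqV)
  have hU := rMulti_eq_rMulti_add_card_window U p hUq.le
  have hV := rMulti_eq_rMulti_add_card_window V p hUq.le
  have := hUV p (U j₀)
  omega

lemma mBruhatLE_comp_swap {l m : Fin n} (hlm : l < m) (hV : V m ≤ V l) :
    MBruhatLE (V ∘ Equiv.swap l m) V := fun p q => by
  rcases rMulti_comp_swap_eq_or hlm hV p q with h | ⟨-, -, -, -, h⟩ <;> omega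

lemma MBruhatLE.le_comp_swap (hUV : MBruhatLE U V) (hagree : ∀ j < j₀, U j = V j)
    {l m : Fin n} (hl : j₀ ≤ l) (hconst : ∀ x, j₀ ≤ x → x ≤ l → V x = V j₀) (hlm : l < m)
    (hUm : U j₀ ≤ V m) (hml : V m < V l)
    (hmin : ∀ m' < m, ¬(l < m' ∧ U j₀ ≤ V m' ∧ V m' < V l)) :
    MBruhatLE U (V ∘ Equiv.swap l m) := fun p q => by
  have hVl : V l = V j₀ := hconst l hl le_rfl
  rcases rMulti_comp_swap_eq_or hlm hml.le p q with h | ⟨hlp, hpm, hmq, hql, h⟩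
  · exact h ▸ hUV p q
  have hgap : ∀ j, j₀ ≤ j → j ≤ p → U j₀ ≤ V j → V j₀ ≤ V j := by
    intro j hj₀j hjp hUj
    by_contra! hjV
    rcases le_or_gt j l with hjl | hlj
    · exact hjV.ne (hconst j hj₀j hjl)
    · exact hmin j (hjp.trans_lt hpm) ⟨hlj, hUj, hVl ▸ hjV⟩
  have := hUV.rMulti_lt hagree (hl.trans hlp) hgap (hUm.trans_lt hmq) (hVl ▸ hql)
  omega

end Bruhat

theorem multiset_bruhat_interpolation_general {n k : ℕ} (I : Fin k → ℕ)
    (U V : Fin n → Fin k) (hU : IsMultisetPerm I U) (hV : IsMultisetPerm I V)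
    (hUV : MBruhatLE U V)
    (j₀ : Fin n) (hj₀ : U j₀ ≠ V j₀) (hj₀min : ∀ j' : Fin n, j' < j₀ → U j' = V j')
    (l : Fin n) (hl : j₀ ≤ l) (hlconst : ∀ x : Fin n, j₀ ≤ x → x ≤ l → V x = V j₀) :
    U j₀ < V j₀ ∧
    (∃ m : Fin n, l < m ∧ U j₀ ≤ V m ∧ V m < V l) ∧
    (∀ m : Fin n, (l < m ∧ U j₀ ≤ V m ∧ V m < V l) →
      (∀ m' : Fin n, m' < m → ¬(l < m' ∧ U j₀ ≤ V m' ∧ V m' < V l)) →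
      MBruhatLE U (V ∘ Equiv.swap l m) ∧ MBruhatLE (V ∘ Equiv.swap l m) V ∧
        V ∘ Equiv.swap l m ≠ V) := by
  have hVl : V l = V j₀ := hlconst l hl le_rfl
  have hlt : U j₀ < V j₀ := (hUV.apply_le_of_forall_lt_eq hj₀min).lt_of_ne hj₀
  refine ⟨hlt, ?_, fun m ⟨hlm, hUm, hml⟩ hmin => ⟨?_, mBruhatLE_comp_swap hlm hml.le, ?_⟩⟩
  · obtain ⟨j, hj₀j, hUj, hjV⟩ := exists_le_apply_lt_of_forall_lt_eq hU hV hj₀min hlt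
    have hlj : l < j := lt_of_not_ge fun hjl => hjV.ne (hlconst j hj₀j hjl)
    exact ⟨j, hlj, hUj, hVl ▸ hjV⟩
  · exact hUV.le_comp_swap hj₀min hl hlconst hlm hUm hml hmin
  · intro h
    exact hml.ne (by simpa using congrFun h l)

/-- if `U ≺ V` in `S_n^I`, `j₀` is the least position where they differ, and
`l ≥ j₀` is maximal with `V` constant on `[j₀, l]`, then `U j₀ < V j₀`; there is `m > l`
with `U j₀ ≤ V m < V l`; and for the least such `m`, setting `V' = V ∘ (l m)` one has
`U ≼ V'`, `V' ≼ V`, `V' ≠ V`. -/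
theorem multiset_bruhat_interpolation {n k : ℕ} (I : Fin k → ℕ) (hI : IsComposition n I)
    (U V : Fin n → Fin k) (hU : IsMultisetPerm I U) (hV : IsMultisetPerm I V)
    (hUV : MBruhatLE U V) (hne : U ≠ V)
    (j₀ : Fin n) (hj₀ : U j₀ ≠ V j₀) (hj₀min : ∀ j' : Fin n, j' < j₀ → U j' = V j')
    (l : Fin n) (hl : j₀ ≤ l) (hlconst : ∀ x : Fin n, j₀ ≤ x → x ≤ l → V x = V j₀)
    (hlmax : ∀ l' : Fin n, l < l' → ¬ (∀ x : Fin n, j₀ ≤ x → x ≤ l' → V x = V j₀)) :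
    U j₀ < V j₀ ∧
    (∃ m : Fin n, l < m ∧ U j₀ ≤ V m ∧ V m < V l) ∧
    (∀ m : Fin n, (l < m ∧ U j₀ ≤ V m ∧ V m < V l) →
      (∀ m' : Fin n, m' < m → ¬(l < m' ∧ U j₀ ≤ V m' ∧ V m' < V l)) →
      MBruhatLE U (V ∘ Equiv.swap l m) ∧ MBruhatLE (V ∘ Equiv.swap l m) V ∧
        V ∘ Equiv.swap l m ≠ V) :=
  multiset_bruhat_interpolation_general I U V hU hV hUV j₀ hj₀ hj₀min l hl hlconst
end

section
/- Let I = (i₁,…,i_k) be a composition of n and let ξ, ζ ∈ S_n^I with ξ ≼ ζ in the Bruhat order on S_n^I. Let s_ξ, s_ζ ∈ S_n be the I-deshuffles of ξ and ζ respectively. Then s_ξ ≼ s_ζ in the Bruhat order on S_n. -/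
/-- `τ₁` is the standard multiset permutation of type `I`. -/
def IsTauOne {n k : ℕ} (I : Fin k → ℕ) (τ₁ : Fin n → Fin k) : Prop :=
  ∀ l : Fin n, (Finset.univ.filter (fun j : Fin k => j < τ₁ l)).sum I ≤ l.val ∧
    l.val < (Finset.univ.filter (fun j : Fin k => j ≤ τ₁ l)).sum I

/-- `s` is the `I`-deshuffle of `υ`: `τ₁ ∘ s = υ` and `s` is increasing on the positions
of each fixed value of `υ`. -/
def IsDeshuffle {n k : ℕ} (τ₁ υ : Fin n → Fin k) (s : Equiv.Perm (Fin n)) : Prop :=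
  (∀ l, τ₁ (s l) = υ l) ∧ ∀ a b : Fin n, a < b → υ a = υ b → s a < s b

/-!
Fix `p, q` and put `c = τ₁ q`. Since `τ₁` is monotone, a deshuffle `s` of `τ` sends every
position `j` with `τ j > c` to `≥ q` and every `j` with `τ j < c` to `< q`. On the fibre
`τ⁻¹(c)` the map `s` is an increasing bijection onto the block `τ₁⁻¹(c)`, so exactly its first
`m = #{l < q | τ₁ l = c}` elements land below `q`. Hence
`r_s[p,q] = A + (f - m) = max(A, r_τ[p,c] - m)`, where `A = #{j ≤ p | τ j > c}` and
`f = #{j ≤ p | τ j = c}`; both `A` and `r_τ[p,c]` grow along the Bruhat order of `S_n^I`.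
-/

open Finset

theorem Finset.card_sdiff_of_subset_or_subset {α : Type*} [DecidableEq α] {s t : Finset α}
    (h : s ⊆ t ∨ t ⊆ s) : #(s \ t) = #s - #t := by
  rcases h with hst | hts
  · rw [sdiff_eq_empty_iff_subset.mpr hst, card_empty, Nat.sub_eq_zero_of_le (card_le_card hst)]
  · exact card_sdiff_of_subset hts

variable {n k : ℕ}

theorem IsTauOne.monotone {I : Fin k → ℕ} {τ₁ : Fin n → Fin k} (h : IsTauOne I τ₁) :
    Monotone τ₁ := by
  intro a b hab
  by_contra! hlt
  have hsum : ∑ j ∈ {j | j ≤ τ₁ b}, I j ≤ ∑ j ∈ {j | j < τ₁ a}, I j :=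
    sum_le_sum_of_subset fun j hj => by
      simp only [mem_filter, mem_univ, true_and] at hj ⊢
      exact hj.trans_lt hlt
  exact hab.not_gt (((h b).2.trans_le hsum).trans_le (h a).1)

theorem rMulti_eq_card_lt_add_card_eq (τ : Fin n → Fin k) (p : Fin n) (c : Fin k) :
    rMulti τ p c = #{j | j ≤ p ∧ c < τ j} + #{j | j ≤ p ∧ τ j = c} := by
  rw [rMulti, ← card_union_of_disjoint (disjoint_filter.mpr fun j _ h h' => h.2.ne' h'.2)]
  congr 1
  ext j
  simp only [mem_filter, mem_univ, true_and, mem_union, le_iff_lt_or_eq (a := c), eq_comm (a := c)]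
  tauto

theorem MBruhatLE.card_lt_le {ξ ζ : Fin n → Fin k} (h : MBruhatLE ξ ζ) (p : Fin n) (c : Fin k) :
    #{j | j ≤ p ∧ c < ξ j} ≤ #{j | j ≤ p ∧ c < ζ j} := by
  by_cases hc : c.val + 1 < k
  · -- `c < x` unfolds to `c.val + 1 ≤ x.val`
    have hsucc (τ : Fin n → Fin k) :
        #{j | j ≤ p ∧ c < τ j} = rMulti τ p ⟨c.val + 1, hc⟩ :=
      rfl
    rw [hsucc, hsucc]
    exact h p _
  · have hempty : ({j | j ≤ p ∧ c < ξ j} : Finset (Fin n)) = ∅ :=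
      filter_false_of_mem fun j _ ⟨_, hlt⟩ => by
        have := (ξ j).isLt
        rw [Fin.lt_def] at hlt
        omega
    simp [hempty]

namespace IsDeshuffle

variable {τ₁ τ : Fin n → Fin k} {s : Equiv.Perm (Fin n)}

theorem card_eq_and_lt (hs : IsDeshuffle τ₁ τ s) (c : Fin k) (q : Fin n) :
    #{j | τ j = c ∧ s j < q} = #{l | τ₁ l = c ∧ l < q} :=
  card_equiv s fun j => by simp [← hs.1 j]

/-- Both sets are initial segments of the fibre `τ⁻¹(c)`, on which `s` is increasing. -/
theorem subset_or_subset (hs : IsDeshuffle τ₁ τ s) (p q : Fin n) (c : Fin k) :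
    ({j | j ≤ p ∧ τ j = c} : Finset (Fin n)) ⊆ ({j | τ j = c ∧ s j < q} : Finset (Fin n)) ∨
      ({j | τ j = c ∧ s j < q} : Finset (Fin n)) ⊆ ({j | j ≤ p ∧ τ j = c} : Finset (Fin n)) := by
  by_cases hbelow : ∃ j', τ j' = c ∧ s j' < q ∧ p < j'
  · obtain ⟨j', hj'c, hj'q, hpj'⟩ := hbelow
    left
    intro j hj
    simp only [mem_filter, mem_univ, true_and] at hj ⊢
    exact ⟨hj.2, (hs.2 j j' (hj.1.trans_lt hpj') (hj.2.trans hj'c.symm)).trans hj'q⟩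
  · push Not at hbelow
    right
    intro j hj
    simp only [mem_filter, mem_univ, true_and] at hj ⊢
    exact ⟨hbelow j hj.1 hj.2, hj.1⟩

theorem rPerm_eq (hτ₁ : Monotone τ₁) (hs : IsDeshuffle τ₁ τ s) (p q : Fin n) :
    rPerm s p q = #{j | j ≤ p ∧ τ₁ q < τ j} +
      (#{j | j ≤ p ∧ τ j = τ₁ q} - #{l | τ₁ l = τ₁ q ∧ l < q}) := by
  set c := τ₁ q
  have hq_le {j : Fin n} (hj : c < τ j) : q ≤ s j := by
    by_contra! h
    exact (hs.1 j ▸ hτ₁ h.le).not_gt hj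
  have hc_le {j : Fin n} (hj : q ≤ s j) : c ≤ τ j := hs.1 j ▸ hτ₁ hj
  have hdisj : Disjoint ({j | j ≤ p ∧ c < τ j} : Finset (Fin n))
      (({j | j ≤ p ∧ τ j = c} : Finset (Fin n)) \ ({j | τ j = c ∧ s j < q} : Finset (Fin n))) :=
    disjoint_left.mpr fun j h h' => by
      simp only [mem_filter, mem_sdiff, mem_univ, true_and] at h h'
      exact h.2.ne' h'.1.2
  rw [← hs.card_eq_and_lt c q, ← card_sdiff_of_subset_or_subset (hs.subset_or_subset p q c),
    ← card_union_of_disjoint hdisj, rPerm]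
  congr 1
  ext j
  simp only [mem_filter, mem_sdiff, mem_union, mem_univ, true_and, not_and, not_lt]
  constructor
  · rintro ⟨hjp, hjq⟩
    rcases (hc_le hjq).lt_or_eq with hlt | heq
    · exact Or.inl ⟨hjp, hlt⟩
    · exact Or.inr ⟨⟨hjp, heq.symm⟩, fun _ => hjq⟩
  · rintro (⟨hjp, hlt⟩ | ⟨⟨hjp, heq⟩, hjq⟩)
    · exact ⟨hjp, hq_le hlt⟩
    · exact ⟨hjp, hjq heq⟩

end IsDeshuffle

theorem deshuffle_monotone_general {n k : ℕ} (I : Fin k → ℕ)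
    (τ₁ : Fin n → Fin k) (hτ₁ : IsTauOne I τ₁)
    (ξ ζ : Fin n → Fin k)
    (hle : MBruhatLE ξ ζ)
    (sξ sζ : Equiv.Perm (Fin n)) (hsξ : IsDeshuffle τ₁ ξ sξ) (hsζ : IsDeshuffle τ₁ ζ sζ) :
    BruhatLE sξ sζ := by
  intro p q
  rw [hsξ.rPerm_eq hτ₁.monotone, hsζ.rPerm_eq hτ₁.monotone]
  have hA := hle.card_lt_le p (τ₁ q)
  have hB := hle p (τ₁ q)
  rw [rMulti_eq_card_lt_add_card_eq, rMulti_eq_card_lt_add_card_eq] at hB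
  omega

/-- if `ξ ≼ ζ` in the Bruhat order on `S_n^I`, then the corresponding
`I`-deshuffles satisfy `s_ξ ≼ s_ζ` in the Bruhat order on `S_n`. -/
theorem deshuffle_monotone {n k : ℕ} (I : Fin k → ℕ) (hI : IsComposition n I)
    (τ₁ : Fin n → Fin k) (hτ₁ : IsTauOne I τ₁)
    (ξ ζ : Fin n → Fin k) (hξ : IsMultisetPerm I ξ) (hζ : IsMultisetPerm I ζ)
    (hle : MBruhatLE ξ ζ)
    (sξ sζ : Equiv.Perm (Fin n)) (hsξ : IsDeshuffle τ₁ ξ sξ) (hsζ : IsDeshuffle τ₁ ζ sζ) :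
    BruhatLE sξ sζ :=
  deshuffle_monotone_general I τ₁ hτ₁ ξ ζ hle sξ sζ hsξ hsζ
end

section
/- Let L be a real symmetric n×n matrix and let B(L) be the matrix with B(L)_{ij} = L_{ij} for i < j, B(L)_{ij} = −L_{ij} for i > j, and B(L)_{ii} = 0. Then the commutator [B(L), L] = B(L)L − L B(L) vanishes if and only if L is a diagonal matrix. (The equilibrium points of the full symmetric Toda flow L' = [B(L), L] are exactly the diagonal matrices.) -/
/-!
Weight the diagonal of `[B(L), L]` by positions: for `D = diag(w)` with `w` strictly
increasing, cyclicity of the trace gives `tr (D [B(L), L]) = tr ([D, B(L)] L)`, and the sign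
pattern of `B(L)` makes `[D, B(L)]_{ij} = -|w_i - w_j| L_{ij}`. For symmetric `L` the trace is
therefore `-∑ |w_i - w_j| L_{ij}²`, so a vanishing commutator kills every off-diagonal entry.
-/

open Matrix

/-- The skew part `B(L) = L₊ - L₋` of a matrix: `B(L)_{ij} = L_{ij}` for `i < j`,
`-L_{ij}` for `i > j`, and `0` on the diagonal. -/
def skewPart {n : ℕ} (L : Matrix (Fin n) (Fin n) ℝ) : Matrix (Fin n) (Fin n) ℝ :=
  Matrix.of fun i j => if i < j then L i j else if j < i then -(L i j) else 0

theorem Matrix.isDiag_of_sum_abs_sub_mul_sq_eq_zero {ι : Type*} [Fintype ι] {w : ι → ℝ}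
    (hw : Function.Injective w) {A : Matrix ι ι ℝ}
    (hA : ∑ i, ∑ j, |w i - w j| * A i j ^ 2 = 0) : A.IsDiag := by
  intro i j hij
  have hrow := (Fintype.sum_eq_zero_iff_of_nonneg fun i =>
    Finset.sum_nonneg fun j _ => by positivity).1 hA
  have hentry := (Fintype.sum_eq_zero_iff_of_nonneg fun j => by positivity).1 (congrFun hrow i)
  have hweight : |w i - w j| ≠ 0 := abs_ne_zero.2 (sub_ne_zero.2 (hw.ne hij))
  simpa [hweight] using congrFun hentry j

namespace skewPart

variable {n : ℕ}

theorem eq_zero_of_isDiag {L : Matrix (Fin n) (Fin n) ℝ} (hL : L.IsDiag) : skewPart L = 0 := by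
  ext i j
  rcases lt_trichotomy i j with h | rfl | h
  · simp [skewPart, h, hL h.ne]
  · simp [skewPart]
  · simp [skewPart, h, h.not_gt, hL h.ne']

theorem diagonal_mul_sub_mul_diagonal_apply {w : Fin n → ℝ} (hw : StrictMono w)
    (L : Matrix (Fin n) (Fin n) ℝ) (i j : Fin n) :
    (diagonal w * skewPart L - skewPart L * diagonal w) i j = -(|w i - w j| * L i j) := by
  rw [Matrix.sub_apply, diagonal_mul, mul_diagonal]
  rcases lt_trichotomy i j with h | rfl | h
  · simp only [skewPart, of_apply, if_pos h, abs_of_neg (sub_neg.2 (hw h))]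
    ring
  · simp [skewPart]
  · simp only [skewPart, of_apply, if_neg h.not_gt, if_pos h, abs_of_pos (sub_pos.2 (hw h))]
    ring

theorem trace_diagonal_mul_commutator {w : Fin n → ℝ} (hw : StrictMono w)
    (L : Matrix (Fin n) (Fin n) ℝ) :
    trace (diagonal w * (skewPart L * L - L * skewPart L))
      = -∑ i, ∑ j, |w i - w j| * L i j * L j i := by
  have hcycle : trace (diagonal w * (skewPart L * L - L * skewPart L))
      = trace ((diagonal w * skewPart L - skewPart L * diagonal w) * L) := by
    rw [mul_sub, sub_mul, trace_sub, trace_sub, ← Matrix.mul_assoc, ← Matrix.mul_assoc,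
      trace_mul_cycle (diagonal w) L]
  rw [hcycle]
  simp only [trace, diag_apply, mul_apply, diagonal_mul_sub_mul_diagonal_apply hw, neg_mul,
    Finset.sum_neg_distrib]

end skewPart

/-- for a real symmetric matrix `L`, the commutator `[B(L), L]` vanishes
if and only if `L` is diagonal (the equilibria of the full symmetric Toda flow are
exactly the diagonal matrices). -/
theorem toda_equilibria_are_diagonal {n : ℕ} (L : Matrix (Fin n) (Fin n) ℝ)
    (hL : L.IsSymm) :
    skewPart L * L - L * skewPart L = 0 ↔ L.IsDiag := by
  refine ⟨fun h => ?_, fun h => by simp [skewPart.eq_zero_of_isDiag h]⟩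
  set w : Fin n → ℝ := fun k => k
  have hw : StrictMono w := Nat.strictMono_cast.comp Fin.val_strictMono
  refine isDiag_of_sum_abs_sub_mul_sq_eq_zero hw.injective ?_
  have htrace := skewPart.trace_diagonal_mul_commutator hw L
  rw [h, Matrix.mul_zero, trace_zero, eq_comm, neg_eq_zero] at htrace
  simpa only [mul_assoc, ← sq, hL.apply] using htrace
end

section
/- Let L be a real symmetric n×n matrix, let B(L) be the matrix with B(L)_{ij} = L_{ij} for i < j, B(L)_{ij} = −L_{ij} for i > j, B(L)_{ii} = 0, and let N = diag(0,1,…,n−1). Then Tr([B(L), L]·N) = 2·Σ_{1 ≤ i < j ≤ n} (i − j)·L_{ij}². In particular, along any solution of the full symmetric Toda flow L'(t) = [B(L(t)), L(t)] with L(t) symmetric, the function t ↦ Tr(L(t)·N) has derivative 2·Σ_{i<j} (i − j)·L(t)_{ij}² ≤ 0. -/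
/-!
Since `B(M)` is skew and `M` symmetric, `[B(M), M]ᵢᵢ = 2 ∑ⱼ B(M)ᵢⱼ Mᵢⱼ`. Hence, for any diagonal
`D = diag(d)`, `Tr([B(M), M] D) = 2 ∑ᵢⱼ dᵢ B(M)ᵢⱼ Mᵢⱼ`, and pairing the terms `(i, j)` and `(j, i)`
with `i < j` turns this into `2 ∑_{i<j} (dᵢ - dⱼ) Mᵢⱼ²`. As `Tr(L N)` is linear in the entries
of `L`, along the Toda flow its derivative is `Tr([B(L), L] N)`, and `dᵢ = i` makes every term
nonpositive.
-/

open Matrix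

/-- `N = diag(0, 1, …, n-1)`. -/
def Nmat (n : ℕ) : Matrix (Fin n) (Fin n) ℝ :=
  Matrix.diagonal fun i : Fin n => ((i : ℕ) : ℝ)

/-- `Σ_{i<j} (i - j) · L_{ij}²`. -/
noncomputable def todaSum {n : ℕ} (L : Matrix (Fin n) (Fin n) ℝ) : ℝ :=
  ∑ p ∈ Finset.univ.filter (fun p : Fin n × Fin n => p.1 < p.2),
    (((p.1 : ℕ) : ℝ) - ((p.2 : ℕ) : ℝ)) * (L p.1 p.2) ^ 2

theorem Finset.sum_sum_eq_sum_lt_add_sum_diag {ι M : Type*} [Fintype ι] [LinearOrder ι]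
    [AddCommMonoid M] (f : ι → ι → M) :
    ∑ i, ∑ j, f i j =
      ∑ p ∈ Finset.univ.filter (fun p : ι × ι => p.1 < p.2), (f p.1 p.2 + f p.2 p.1) +
        ∑ i, f i i := by
  have split : ∀ i j, f i j =
      ((if i < j then f i j else 0) + if j < i then f i j else 0) + if i = j then f i j else 0 := by
    intro i j
    rcases lt_trichotomy i j with h | rfl | h
    · simp [h, h.ne, not_lt.mpr h.le]
    · simp
    · simp [h, h.ne', not_lt.mpr h.le]
  rw [Finset.sum_filter, Fintype.sum_prod_type]
  conv_lhs => enter [2, i, 2, j]; rw [split i j]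
  simp only [Finset.sum_add_distrib, Finset.sum_ite_eq, Finset.mem_univ, if_true]
  rw [Finset.sum_comm (f := fun i j => if j < i then f i j else 0)]
  simp only [← Finset.sum_add_distrib, ite_add_ite, add_zero]

section skewPart

variable {n : ℕ} (M : Matrix (Fin n) (Fin n) ℝ)

@[simp]
theorem skewPart_apply_self (i : Fin n) : skewPart M i i = 0 := by
  simp [skewPart]

theorem skewPart_apply_of_lt {i j : Fin n} (h : i < j) : skewPart M i j = M i j := by
  simp [skewPart, h]

theorem skewPart_apply_of_gt {i j : Fin n} (h : j < i) : skewPart M i j = -M i j := by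
  simp [skewPart, h, not_lt.mpr h.le]

variable {M}

theorem Matrix.IsSymm.skewPart_apply_swap (hM : M.IsSymm) (i j : Fin n) :
    skewPart M j i = -skewPart M i j := by
  rcases lt_trichotomy i j with h | rfl | h
  · rw [skewPart_apply_of_gt M h, skewPart_apply_of_lt M h, hM.apply]
  · simp
  · rw [skewPart_apply_of_lt M h, skewPart_apply_of_gt M h, hM.apply, neg_neg]

theorem Matrix.IsSymm.commutator_skewPart_apply_self (hM : M.IsSymm) (i : Fin n) :
    (skewPart M * M - M * skewPart M) i i = 2 * ∑ j, skewPart M i j * M i j := by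
  simp only [sub_apply, mul_apply, ← Finset.sum_sub_distrib, Finset.mul_sum]
  refine Finset.sum_congr rfl fun j _ => ?_
  rw [hM.skewPart_apply_swap, hM.apply]
  ring

theorem Matrix.IsSymm.trace_commutator_skewPart_mul_diagonal (hM : M.IsSymm) (d : Fin n → ℝ) :
    trace ((skewPart M * M - M * skewPart M) * diagonal d) =
      2 * ∑ p ∈ Finset.univ.filter (fun p : Fin n × Fin n => p.1 < p.2),
        (d p.1 - d p.2) * M p.1 p.2 ^ 2 := by
  have hdiag : ∀ i, (skewPart M * M - M * skewPart M) i i * d i =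
      2 * ∑ j, d i * (skewPart M i j * M i j) := fun i => by
    rw [hM.commutator_skewPart_apply_self, Finset.mul_sum, Finset.mul_sum, Finset.sum_mul]
    exact Finset.sum_congr rfl fun j _ => by ring
  simp only [trace, diag, mul_diagonal, hdiag]
  rw [← Finset.mul_sum, Finset.sum_sum_eq_sum_lt_add_sum_diag]
  simp only [skewPart_apply_self, zero_mul, mul_zero, Finset.sum_const_zero, add_zero]
  congr 1
  refine Finset.sum_congr rfl fun p hp => ?_
  have hlt : p.1 < p.2 := (Finset.mem_filter.mp hp).2
  rw [skewPart_apply_of_lt M hlt, skewPart_apply_of_gt M hlt, hM.apply p.2 p.1]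
  ring

end skewPart

theorem hasDerivAt_trace_mul_const {𝕜 ι : Type*} [NontriviallyNormedField 𝕜] [Fintype ι]
    {L : 𝕜 → Matrix ι ι 𝕜} {L' : Matrix ι ι 𝕜} {t : 𝕜}
    (hL : ∀ i j, HasDerivAt (fun s => L s i j) (L' i j) t) (A : Matrix ι ι 𝕜) :
    HasDerivAt (fun s => trace (L s * A)) (trace (L' * A)) t := by
  simp only [trace, diag, mul_apply]
  exact HasDerivAt.fun_sum fun i _ => HasDerivAt.fun_sum fun j _ => (hL i j).mul_const _

theorem todaSum_nonpos {n : ℕ} (M : Matrix (Fin n) (Fin n) ℝ) : todaSum M ≤ 0 := by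
  refine Finset.sum_nonpos fun p hp => mul_nonpos_of_nonpos_of_nonneg ?_ (sq_nonneg _)
  have hlt : (p.1 : ℕ) < p.2 := (Finset.mem_filter.mp hp).2
  exact sub_nonpos.mpr (Nat.cast_le.mpr hlt.le)

/-- for any real symmetric `M` one has
`Tr([B(M), M]·N) = 2·Σ_{i<j} (i-j)·M_{ij}²`; consequently along any symmetric solution of
the full symmetric Toda flow `L' = [B(L), L]`, the function `t ↦ Tr(L(t)·N)` has
derivative `2·Σ_{i<j} (i-j)·L(t)_{ij}² ≤ 0`. -/
theorem trace_commutator_N_eq_and_monotone {n : ℕ}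
    (L : ℝ → Matrix (Fin n) (Fin n) ℝ)
    (hsym : ∀ t, (L t).IsSymm)
    (hode : ∀ t (i j : Fin n), HasDerivAt (fun s => L s i j)
      ((skewPart (L t) * L t - L t * skewPart (L t)) i j) t) :
    (∀ M : Matrix (Fin n) (Fin n) ℝ, M.IsSymm →
      Matrix.trace ((skewPart M * M - M * skewPart M) * Nmat n) = 2 * todaSum M) ∧
    (∀ t : ℝ, HasDerivAt (fun s => Matrix.trace (L s * Nmat n)) (2 * todaSum (L t)) t ∧
      2 * todaSum (L t) ≤ 0) := by
  have trace_eq : ∀ M : Matrix (Fin n) (Fin n) ℝ, M.IsSymm →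
      trace ((skewPart M * M - M * skewPart M) * Nmat n) = 2 * todaSum M :=
    fun M hM => hM.trace_commutator_skewPart_mul_diagonal _
  refine ⟨trace_eq, fun t => ⟨?_, by linarith [todaSum_nonpos (L t)]⟩⟩
  rw [← trace_eq (L t) (hsym t)]
  exact hasDerivAt_trace_mul_const (hode t) (Nmat n)
end

section
/- Let D be a real diagonal n×n matrix, let N = diag(0,1,…,n−1), and let X be a real antisymmetric n×n matrix. Then the function f(t) = Tr(exp(tX)·D·exp(−tX)·N) satisfies f''(0) = 2·Σ_{1 ≤ i < j ≤ n} X_{ij}²·(j − i)·(D_{ii} − D_{jj}). (With D_{ii} = λ_{w(i)} this is the Hessian of the Toda potential F(Ψ) = Tr(ΨΛΨᵀN) at the permutation point s_w: d²F = Σ_{i<j} θ_{ij}²(λ_{w(i)} − λ_{w(j)})(j − i), up to an overall factor 2.) -/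
/-!
Differentiating `t ↦ exp (tX) A exp (-tX)` twice at `0` gives `⁅X, ⁅X, A⁆⁆`. For `A = diag d`
and `N = diag m`, `Tr (⁅X, ⁅X, A⁆⁆ N) = 2 ∑_{i,j} X_ij X_ji (d_i - d_j) m_i`; antisymmetry turns
`X_ij X_ji` into `-X_ij²`, and pairing the `(i, j)` and `(j, i)` terms gives the sum over `i < j`.
-/

open Finset Matrix NormedSpace

theorem Finset.sum_sum_eq_sum_lt_add_swap {ι M : Type*} [Fintype ι] [LinearOrder ι]
    [AddCommMonoid M] (F : ι → ι → M) (hF : ∀ i, F i i = 0) :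
    ∑ i, ∑ j, F i j = ∑ p ∈ univ.filter (fun p : ι × ι => p.1 < p.2), (F p.1 p.2 + F p.2 p.1) := by
  rw [← Fintype.sum_prod_type', ← sum_filter_add_sum_filter_not univ (fun p : ι × ι => p.1 < p.2),
    sum_add_distrib]
  congr 1
  calc ∑ p ∈ univ.filter (fun p : ι × ι => ¬p.1 < p.2), F p.1 p.2
      = ∑ p ∈ univ.filter (fun p : ι × ι => p.2 < p.1), F p.1 p.2 := by
        rw [sum_filter, sum_filter]
        refine sum_congr rfl fun p _ => ?_
        rcases lt_trichotomy p.1 p.2 with h | h | h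
        · simp [h, h.not_gt]
        · simp [h, hF]
        · simp [h, h.not_gt]
    _ = ∑ p ∈ univ.filter (fun p : ι × ι => p.1 < p.2), F p.2 p.1 :=
        sum_equiv (Equiv.prodComm ι ι) (by simp) (by simp)

section ExpConj

variable {𝕂 𝔸 : Type*} [RCLike 𝕂] [NormedRing 𝔸] [NormedAlgebra 𝕂 𝔸] [CompleteSpace 𝔸]

theorem hasDerivAt_exp_smul_mul_mul_exp_neg_smul (X A : 𝔸) (t : 𝕂) :
    HasDerivAt (fun t : 𝕂 => exp (t • X) * A * exp (-(t • X)))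
      (exp (t • X) * ⁅X, A⁆ * exp (-(t • X))) t := by
  have hexp := hasDerivAt_exp_smul_const X t
  have hexp_neg : HasDerivAt (fun t : 𝕂 => exp (-(t • X))) (-X * exp (-(t • X))) t := by
    simpa only [smul_neg] using hasDerivAt_exp_smul_const' (-X) t
  refine ((hexp.mul_const A).mul hexp_neg).congr_deriv ?_
  rw [Ring.lie_def]
  noncomm_ring

theorem deriv_deriv_clm_exp_conj_zero {F : Type*} [NormedAddCommGroup F] [NormedSpace 𝕂 F]
    (L : 𝔸 →L[𝕂] F) (X A : 𝔸) :
    deriv (deriv fun t : 𝕂 => L (exp (t • X) * A * exp (-(t • X)))) 0 = L ⁅X, ⁅X, A⁆⁆ := by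
  have hL (B : 𝔸) (t : 𝕂) :
      HasDerivAt (fun t : 𝕂 => L (exp (t • X) * B * exp (-(t • X))))
        (L (exp (t • X) * ⁅X, B⁆ * exp (-(t • X)))) t :=
    L.hasFDerivAt.comp_hasDerivAt t (hasDerivAt_exp_smul_mul_mul_exp_neg_smul X B t)
  rw [funext fun t => (hL A t).deriv, (hL ⁅X, A⁆ 0).deriv]
  simp

end ExpConj

theorem Matrix.trace_lie_lie_diagonal_mul_diagonal {ι R : Type*} [Fintype ι] [DecidableEq ι]
    [CommRing R] (X : Matrix ι ι R) (d m : ι → R) :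
    trace (⁅X, ⁅X, diagonal d⁆⁆ * diagonal m) =
      ∑ i, ∑ j, 2 * (X i j * X j i) * (d i - d j) * m i := by
  simp only [Ring.lie_def, trace, diag_apply, sub_apply, mul_apply, diagonal_apply, mul_ite,
    ite_mul, mul_zero, zero_mul, sum_ite_eq, sum_ite_eq', mem_univ, if_true]
  refine sum_congr rfl fun i _ => ?_
  rw [← sum_sub_distrib, sum_mul]
  exact sum_congr rfl fun j _ => by ring

-- Any matrix norm induces the product topology, so `exp` and the derivatives do not depend on it.
attribute [local instance] Matrix.linftyOpNormedRing Matrix.linftyOpNormedAlgebra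

/-- for a real diagonal matrix `D = diag(d)`, `N = diag(0,…,n-1)` and an
antisymmetric matrix `X`, the function `f(t) = Tr(e^{tX} D e^{-tX} N)` satisfies
`f''(0) = 2 Σ_{i<j} X_{ij}² (j-i) (d_i - d_j)` (the Hessian of the Toda potential). -/
theorem hessian_of_toda_potential {n : ℕ} (d : Fin n → ℝ)
    (X : Matrix (Fin n) (Fin n) ℝ) (hX : Xᵀ = -X) :
    deriv (deriv (fun t : ℝ =>
        Matrix.trace (NormedSpace.exp (t • X) * Matrix.diagonal d *
          NormedSpace.exp (-(t • X)) * Matrix.diagonal fun i : Fin n => ((i : ℕ) : ℝ)))) 0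
      = 2 * ∑ p ∈ Finset.univ.filter (fun p : Fin n × Fin n => p.1 < p.2),
          (X p.1 p.2) ^ 2 * (((p.2 : ℕ) : ℝ) - ((p.1 : ℕ) : ℝ)) * (d p.1 - d p.2) := by
  have hX_apply (i j : Fin n) : X j i = -X i j := by
    simpa using congrFun (congrFun hX i) j
  let N : Matrix (Fin n) (Fin n) ℝ := diagonal fun i : Fin n => ((i : ℕ) : ℝ)
  let L : Matrix (Fin n) (Fin n) ℝ →L[ℝ] ℝ :=
    LinearMap.toContinuousLinearMap (traceLinearMap (Fin n) ℝ ℝ ∘ₗ LinearMap.mulRight ℝ N)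
  calc _ = trace (⁅X, ⁅X, diagonal d⁆⁆ * N) := deriv_deriv_clm_exp_conj_zero L X (diagonal d)
    _ = ∑ i, ∑ j, 2 * (X i j * X j i) * (d i - d j) * ((i : ℕ) : ℝ) :=
      trace_lie_lie_diagonal_mul_diagonal X d _
    _ = ∑ p ∈ univ.filter (fun p : Fin n × Fin n => p.1 < p.2),
          (2 * (X p.1 p.2 * X p.2 p.1) * (d p.1 - d p.2) * ((p.1 : ℕ) : ℝ) +
            2 * (X p.2 p.1 * X p.1 p.2) * (d p.2 - d p.1) * ((p.2 : ℕ) : ℝ)) :=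
      sum_sum_eq_sum_lt_add_swap _ fun i => by simp
    _ = _ := by
      rw [mul_sum]
      refine sum_congr rfl fun p _ => ?_
      rw [hX_apply p.1 p.2]
      ring
end

section
/- Let λ < μ be real numbers, let J ⊆ ℝ be an open interval, and let L : J → (real symmetric 3×3 matrices) be differentiable and satisfy the full symmetric Toda equation L'(t) = [B(L(t)), L(t)] for all t ∈ J. Assume that for all t ∈ J one has (L(t) − λ·1)(L(t) − μ·1) = 0 and Tr(L(t)) = 2λ + μ (so L(t) has eigenvalues λ, λ, μ), and that L(t)_{13} ≠ 0 for all t ∈ J. Then the function t ↦ L(t)_{12}·L(t)_{23} / (L(t)_{13})³ is constant on J. (In terms of the matrix entries a_{ij} of the Lax matrix, I = a₁₂a₂₃/a₁₃³ is an integral of motion of the Toda system on ℝP² with λ₁ = λ₂.) -/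
/-
Write `x = L₁₂`, `y = L₂₃`, `z = L₁₃` (1-based here, so `x` is `L 0 1` in the code).
For symmetric `L` the Toda equation reads
`x' = x (L₂₂ - L₁₁) + 2 y z`, `y' = y (L₃₃ - L₂₂) - 2 x z`, `z' = z (L₃₃ - L₁₁)`,
so the numerator of `(x y / z³)'` is
`x' y z + x y' z - 3 x y z' = 2 z (x y (L₁₁ - L₃₃) + z (y² - x²))`.
The bracket vanishes: `(L - λ)(L - μ) = 0` makes the off-diagonal entries of `L²` equal to
`(λ + μ)` times those of `L`, and `y (L²)₁₂ - x (L²)₂₃` is exactly that bracket.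
-/

open Matrix

lemma Matrix.mul_self_apply_of_quadratic_of_ne {n : ℕ} {L : Matrix (Fin n) (Fin n) ℝ} {lam mu : ℝ}
    (h : (L - lam • 1) * (L - mu • 1) = 0) {i j : Fin n} (hij : i ≠ j) :
    (L * L) i j = (lam + mu) * L i j := by
  have hij' := congrFun (congrFun h i) j
  simp only [mul_sub, sub_mul, Algebra.smul_mul_assoc, one_mul, Algebra.mul_smul_comm, mul_one,
    sub_apply, smul_apply, smul_eq_mul, one_apply_ne hij, mul_zero, sub_zero, zero_apply] at hij'
  linarith

section SymmetricThree

variable {L : Matrix (Fin 3) (Fin 3) ℝ}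

lemma Matrix.IsSymm.skewPart_commutator_apply_zero_one (hL : L.IsSymm) :
    (skewPart L * L - L * skewPart L) 0 1 = L 0 1 * (L 1 1 - L 0 0) + 2 * L 0 2 * L 1 2 := by
  simp only [skewPart, Matrix.sub_apply, mul_apply, of_apply, Fin.sum_univ_three, hL.apply,
    Fin.reduceLT, lt_self_iff_false, ↓reduceIte]
  ring

lemma Matrix.IsSymm.skewPart_commutator_apply_one_two (hL : L.IsSymm) :
    (skewPart L * L - L * skewPart L) 1 2 = L 1 2 * (L 2 2 - L 1 1) - 2 * L 0 1 * L 0 2 := by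
  simp only [skewPart, Matrix.sub_apply, mul_apply, of_apply, Fin.sum_univ_three, hL.apply,
    Fin.reduceLT, lt_self_iff_false, ↓reduceIte]
  ring

lemma Matrix.IsSymm.skewPart_commutator_apply_zero_two (hL : L.IsSymm) :
    (skewPart L * L - L * skewPart L) 0 2 = L 0 2 * (L 2 2 - L 0 0) := by
  simp only [skewPart, Matrix.sub_apply, mul_apply, of_apply, Fin.sum_univ_three, hL.apply,
    Fin.reduceLT, lt_self_iff_false, ↓reduceIte]
  ring

lemma Matrix.IsSymm.offDiag_relation_of_quadratic (hL : L.IsSymm) {lam mu : ℝ}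
    (h : (L - lam • 1) * (L - mu • 1) = 0) :
    L 0 1 * L 1 2 * (L 0 0 - L 2 2) + L 0 2 * (L 1 2 ^ 2 - L 0 1 ^ 2) = 0 := by
  have h01 := mul_self_apply_of_quadratic_of_ne h (i := 0) (j := 1) (by decide)
  have h12 := mul_self_apply_of_quadratic_of_ne h (i := 1) (j := 2) (by decide)
  simp only [mul_apply, Fin.sum_univ_three, hL.apply] at h01 h12
  linear_combination L 1 2 * h01 - L 0 1 * h12

end SymmetricThree

lemma HasDerivAt.mul_div_pow_three {x y z : ℝ → ℝ} {x' y' z' t : ℝ} (hx : HasDerivAt x x' t)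
    (hy : HasDerivAt y y' t) (hz : HasDerivAt z z' t) (hzt : z t ≠ 0) :
    HasDerivAt (fun s => x s * y s / z s ^ 3)
      ((x' * y t * z t + x t * y' * z t - 3 * x t * y t * z') / z t ^ 4) t := by
  refine ((hx.mul hy).div (hz.pow 3) (pow_ne_zero 3 hzt)).congr_deriv ?_
  simp only [Pi.mul_apply, Pi.pow_apply]
  field_simp
  ring

lemma toda_rp2_hasDerivAt_integral {L : ℝ → Matrix (Fin 3) (Fin 3) ℝ} {lam mu t : ℝ}
    (hsym : (L t).IsSymm)
    (hode : ∀ i j : Fin 3,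
      HasDerivAt (fun s => L s i j) ((skewPart (L t) * L t - L t * skewPart (L t)) i j) t)
    (heig : (L t - lam • 1) * (L t - mu • 1) = 0) (h13 : L t 0 2 ≠ 0) :
    HasDerivAt (fun s => L s 0 1 * L s 1 2 / L s 0 2 ^ 3) 0 t := by
  have hI := (hode 0 1).mul_div_pow_three (hode 1 2) (hode 0 2) h13
  rw [hsym.skewPart_commutator_apply_zero_one, hsym.skewPart_commutator_apply_one_two,
    hsym.skewPart_commutator_apply_zero_two] at hI
  convert hI using 1
  rw [eq_div_iff (pow_ne_zero 4 h13)]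
  linear_combination -2 * L t 0 2 * hsym.offDiag_relation_of_quadratic heig

theorem toda_rp2_integral_of_motion_general (lam mu : ℝ) (a b : ℝ)
    (L : ℝ → Matrix (Fin 3) (Fin 3) ℝ)
    (hsym : ∀ t ∈ Set.Ioo a b, (L t).IsSymm)
    (hode : ∀ t ∈ Set.Ioo a b, ∀ i j : Fin 3,
      HasDerivAt (fun s => L s i j)
        ((skewPart (L t) * L t - L t * skewPart (L t)) i j) t)
    (heig : ∀ t ∈ Set.Ioo a b,
      (L t - lam • (1 : Matrix (Fin 3) (Fin 3) ℝ)) *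
        (L t - mu • (1 : Matrix (Fin 3) (Fin 3) ℝ)) = 0)
    (h13 : ∀ t ∈ Set.Ioo a b, L t 0 2 ≠ 0) :
    ∀ t₁ ∈ Set.Ioo a b, ∀ t₂ ∈ Set.Ioo a b,
      L t₁ 0 1 * L t₁ 1 2 / (L t₁ 0 2) ^ 3 = L t₂ 0 1 * L t₂ 1 2 / (L t₂ 0 2) ^ 3 := by
  intro t₁ ht₁ t₂ ht₂
  have hI : ∀ t ∈ Set.Ioo a b, HasDerivAt (fun s => L s 0 1 * L s 1 2 / L s 0 2 ^ 3) 0 t :=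
    fun t ht => toda_rp2_hasDerivAt_integral (hsym t ht) (hode t ht) (heig t ht) (h13 t ht)
  exact isOpen_Ioo.is_const_of_deriv_eq_zero isPreconnected_Ioo
    (fun t ht => (hI t ht).differentiableAt.differentiableWithinAt) (fun t ht => (hI t ht).deriv)
    ht₁ ht₂

/-- along any solution of the full symmetric Toda flow `L' = [B(L), L]` of
symmetric `3 × 3` matrices with eigenvalues `λ, λ, μ` (`λ < μ`) and `L₁₃ ≠ 0` on an open
interval, the quantity `I = L₁₂·L₂₃ / L₁₃³` is constant (an integral of motion of the
Toda system on `ℝP²`). Indices are 0-based: `L₁₂ = L 0 1`, etc. -/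
theorem toda_rp2_integral_of_motion (lam mu : ℝ) (hlm : lam < mu) (a b : ℝ)
    (L : ℝ → Matrix (Fin 3) (Fin 3) ℝ)
    (hsym : ∀ t ∈ Set.Ioo a b, (L t).IsSymm)
    (hode : ∀ t ∈ Set.Ioo a b, ∀ i j : Fin 3,
      HasDerivAt (fun s => L s i j)
        ((skewPart (L t) * L t - L t * skewPart (L t)) i j) t)
    (heig : ∀ t ∈ Set.Ioo a b,
      (L t - lam • (1 : Matrix (Fin 3) (Fin 3) ℝ)) *
        (L t - mu • (1 : Matrix (Fin 3) (Fin 3) ℝ)) = 0)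
    (htr : ∀ t ∈ Set.Ioo a b, Matrix.trace (L t) = 2 * lam + mu)
    (h13 : ∀ t ∈ Set.Ioo a b, L t 0 2 ≠ 0) :
    ∀ t₁ ∈ Set.Ioo a b, ∀ t₂ ∈ Set.Ioo a b,
      L t₁ 0 1 * L t₁ 1 2 / (L t₁ 0 2) ^ 3 = L t₂ 0 1 * L t₂ 1 2 / (L t₂ 0 2) ^ 3 :=
  toda_rp2_integral_of_motion_general lam mu a b L hsym hode heig h13
end

section
/- Let λ ≠ μ be real numbers, Λ = diag(λ, λ, μ), and let Ψ be a real orthogonal 3×3 matrix with Ψ₁₃·Ψ₃₃ ≠ 0. Set L = Ψ Λ Ψᵀ (so L is symmetric with eigenvalues λ, λ, μ). Then L₁₂·L₂₃ / (L₁₃)³ = Ψ₂₃² / ((μ − λ)·Ψ₁₃²·Ψ₃₃²). (This identifies the two expressions for the integral I_{(ℝP², λ₁=λ₂)} of the Toda flow, in the angle variables ψ_{ij} and in the Lax-matrix entries a_{ij}.) -/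
/-!
Subtracting `λ` from the spectrum changes `L = Ψ Λ Ψᵀ` only by the scalar matrix `λ • 1`, because
`Ψ Ψᵀ = 1`. Hence every off-diagonal entry of `L` is an entry of the rank-one matrix
`(μ - λ) • Ψ₃ Ψ₃ᵀ`, where `Ψ₃` is the third column of `Ψ`: `Lᵢⱼ = (μ - λ) Ψᵢ₃ Ψⱼ₃`.
Both sides of the identity are then the same rational function of `μ - λ`, `Ψ₁₃`, `Ψ₂₃`, `Ψ₃₃`.
-/

open Matrix

section

variable {n R : Type*} [Fintype n] [DecidableEq n] [CommRing R]

theorem mul_diagonal_mul_transpose_eq_sub_add_smul_one {Ψ : Matrix n n R} (hΨ : Ψ * Ψᵀ = 1)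
    (d : n → R) (c : R) :
    Ψ * diagonal d * Ψᵀ = Ψ * diagonal (d - fun _ => c) * Ψᵀ + c • 1 := by
  have hd : diagonal d = diagonal (d - fun _ => c) + c • (1 : Matrix n n R) := by
    rw [← diagonal_one, ← diagonal_smul, diagonal_add]
    congr 1
    ext k
    simp
  rw [hd, Matrix.mul_add, Matrix.add_mul, Matrix.mul_smul, Matrix.smul_mul, Matrix.mul_one, hΨ]

theorem mul_diagonal_mul_transpose_apply_of_ne {Ψ : Matrix n n R} (hΨ : Ψ * Ψᵀ = 1)
    (d : n → R) (c : R) {i j : n} (hij : i ≠ j) :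
    (Ψ * diagonal d * Ψᵀ) i j = ∑ k, (d k - c) * Ψ i k * Ψ j k := by
  rw [mul_diagonal_mul_transpose_eq_sub_add_smul_one hΨ d c, Matrix.add_apply, Matrix.smul_apply,
    one_apply_ne hij, smul_zero, add_zero, mul_apply]
  simp only [mul_diagonal, transpose_apply, Pi.sub_apply]
  exact Finset.sum_congr rfl fun k _ => by ring

end

theorem mul_diagonal_double_mul_transpose_apply_of_ne {R : Type*} [CommRing R]
    {Ψ : Matrix (Fin 3) (Fin 3) R} (hΨ : Ψ * Ψᵀ = 1) (lam mu : R) {i j : Fin 3} (hij : i ≠ j) :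
    (Ψ * diagonal ![lam, lam, mu] * Ψᵀ) i j = (mu - lam) * (Ψ i 2 * Ψ j 2) := by
  rw [mul_diagonal_mul_transpose_apply_of_ne hΨ _ lam hij, Fin.sum_univ_three]
  simp only [Matrix.cons_val_zero, Matrix.cons_val_one, Matrix.cons_val_two, Matrix.head_cons,
    Matrix.tail_cons, sub_self]
  ring

/-- Indices are 0-based: `Ψ₁₃ = Ψ 0 2`, `Ψ₂₃ = Ψ 1 2`, `Ψ₃₃ = Ψ 2 2`. -/
theorem toda_rp2_integral_two_expressions (lam mu : ℝ) (hlm : lam ≠ mu)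
    (Ψ : Matrix (Fin 3) (Fin 3) ℝ) (hΨ : Ψ * Ψᵀ = 1)
    (hne : Ψ 0 2 * Ψ 2 2 ≠ 0)
    (L : Matrix (Fin 3) (Fin 3) ℝ)
    (hL : L = Ψ * Matrix.diagonal ![lam, lam, mu] * Ψᵀ) :
    L 0 1 * L 1 2 / (L 0 2) ^ 3
      = (Ψ 1 2) ^ 2 / ((mu - lam) * (Ψ 0 2) ^ 2 * (Ψ 2 2) ^ 2) := by
  have hml : mu - lam ≠ 0 := sub_ne_zero.mpr hlm.symm
  obtain ⟨h0, h2⟩ := mul_ne_zero_iff.mp hne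
  subst hL
  rw [mul_diagonal_double_mul_transpose_apply_of_ne hΨ lam mu (by decide : (0 : Fin 3) ≠ 1),
    mul_diagonal_double_mul_transpose_apply_of_ne hΨ lam mu (by decide : (1 : Fin 3) ≠ 2),
    mul_diagonal_double_mul_transpose_apply_of_ne hΨ lam mu (by decide : (0 : Fin 3) ≠ 2)]
  field_simp
end
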